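/- Let 1 ≤ i ≤ n and set B_i := O(V_i) ⊗_{O(V_i)^{s_i}} O(V_i). Then there is an isomorphism of (O(Z),O(Z))-bimodules O(V_i) ⊗_{O(V_i)^{s_i}} O(V_i) ⊗_{O(V_i)^{s_i}} O(V_i) ≅ B_i ⊕ B_i, where the left and right O(Z)-actions are through the restriction O(Z) → O(V_i) on the outer factors. (This is the underlying ungraded form of the third Temperley–Lieb relation B_i ∗ B_i ≅ B_i ⊕ B_i[−2]; the second summand corresponds via multiplication by f_i to a copy of B_i shifted in degree by −2.) -/

import Mathlib

/-! Basic setup: type A_n geometric representation, Weyl lines, combinatorics. -/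

set_option linter.unusedSectionVars false
set_option synthInstance.maxHeartbeats 1000000
set_option maxHeartbeats 1000000

namespace TLpaper

/-- A permutation is a transposition. -/
def IsTransposition {α : Type} [DecidableEq α] (σ : Equiv.Perm α) : Prop :=
  ∃ a b, a ≠ b ∧ σ = Equiv.swap a b

variable (k : Type) [Field k] [CharZero k] (n : ℕ)

/-- The reflecting hyperplane of a permutation `t` inside `V = {x | ∑ x i = 0}`:
the set of points of `V` fixed by permuting the coordinates by `t`.  For a
transposition `t = (a b)` this is `{x ∈ V | x a = x b}`. -/
def Hyp (t : Equiv.Perm (Fin (n + 1))) : Set (Fin (n + 1) → k) :=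
  {x | (∑ i, x i) = 0 ∧ ∀ i, x (t i) = x i}

/-- A Weyl line: a one-dimensional linear subspace of `V` which is an
intersection of a (possibly empty) family of reflecting hyperplanes. -/
def IsWeylLine (L : Set (Fin (n + 1) → k)) : Prop :=
  (∃ v : Fin (n + 1) → k, v ≠ 0 ∧ L = Set.range fun c : k => c • v) ∧
  ∃ T : Set (Equiv.Perm (Fin (n + 1))),
    (∀ t ∈ T, IsTransposition t) ∧
    L = {x | (∑ i, x i) = 0} ∩ ⋂ t ∈ T, Hyp k n t

/-- `Z`: the union of all Weyl lines. -/
def ZZ : Set (Fin (n + 1) → k) := ⋃ L ∈ {L | IsWeylLine k n L}, L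

/-- `V_t`: the union of all Weyl lines transverse to `t` (i.e. not contained in `H_t`). -/
def Vt (t : Equiv.Perm (Fin (n + 1))) : Set (Fin (n + 1) → k) :=
  ⋃ L ∈ {L | IsWeylLine k n L ∧ ¬L ⊆ Hyp k n t}, L

open Fin.NatCast in
/-- The simple transposition `s_i = (i, i+1)` (0-indexed: it swaps coordinates
`i` and `i+1` of `Fin (n+1)`, for `i < n`). -/
def simple (i : ℕ) : Equiv.Perm (Fin (n + 1)) :=
  Equiv.swap (i : Fin (n + 1)) ((i + 1 : ℕ) : Fin (n + 1))

/-- `V_i := V_{s_i}`. -/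
def Vi (i : ℕ) : Set (Fin (n + 1) → k) := Vt k n (simple n i)

/-- The action of a permutation on a subset of `k^{n+1}` (permuting coordinates). -/
def permSet (σ : Equiv.Perm (Fin (n + 1))) (W : Set (Fin (n + 1) → k)) :
    Set (Fin (n + 1) → k) :=
  (fun x => x ∘ σ) '' W

/-- `i · W := V_i ∩ (W ∪ s_i (W))`. -/
def dotAct (i : ℕ) (W : Set (Fin (n + 1) → k)) : Set (Fin (n + 1) → k) :=
  Vi k n i ∩ (W ∪ permSet k n (simple n i) W)

/-- The set `W_{i_1 ⋯ i_m}` associated with a sequence of indices. -/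
def seqSet : List ℕ → Set (Fin (n + 1) → k)
  | [] => ZZ k n
  | [i] => Vi k n i
  | i :: j :: l => dotAct k n i (seqSet (j :: l))

/-- Membership in the family `𝒱_n`. -/
def memVn (W : Set (Fin (n + 1) → k)) : Prop :=
  ∃ l : List ℕ, l ≠ [] ∧ (∀ i ∈ l, i < n) ∧ W = seqSet k n l

/-- A set of pairwise commuting transpositions. -/
def CommTranspositions (Q : Set (Equiv.Perm (Fin (n + 1)))) : Prop :=
  (∀ t ∈ Q, IsTransposition t) ∧ ∀ t ∈ Q, ∀ t' ∈ Q, t * t' = t' * t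


/-! Coordinate rings of subvarieties of `k^{n+1}`. -/

noncomputable section

/-- The ring `O(X)` of regular functions on `X`: the quotient of the polynomial ring
`k[X_0, …, X_n]` by the vanishing ideal of `X`. -/
def O (X : Set (Fin (n + 1) → k)) : Type :=
  MvPolynomial (Fin (n + 1)) k ⧸ MvPolynomial.vanishingIdeal k X

instance (X : Set (Fin (n + 1) → k)) : CommRing (O k n X) :=
  inferInstanceAs (CommRing (MvPolynomial (Fin (n + 1)) k ⧸ MvPolynomial.vanishingIdeal k X))

theorem vanishingIdeal_anti {X Y : Set (Fin (n + 1) → k)} (h : X ⊆ Y) :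
    MvPolynomial.vanishingIdeal k Y ≤ MvPolynomial.vanishingIdeal k X := fun p hp => by
  rw [MvPolynomial.mem_vanishingIdeal_iff] at hp ⊢
  exact fun x hx => hp x (h hx)

/-- The (surjective) restriction homomorphism `O(Y) → O(X)` for `X ⊆ Y`. -/
def res {X Y : Set (Fin (n + 1) → k)} (h : X ⊆ Y) : O k n Y →+* O k n X :=
  Ideal.Quotient.factor (vanishingIdeal_anti k n h)

open Classical in
/-- The ring endomorphism of `O(X)` induced by a permutation `σ` of the coordinates
(when `X` is `σ`-stable; the definition branches on this (true, in our uses)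
stability condition to be total). -/
def permO (σ : Equiv.Perm (Fin (n + 1))) (X : Set (Fin (n + 1) → k)) :
    O k n X →+* O k n X :=
  if h : ∀ x ∈ X, x ∘ σ ∈ X then
    Ideal.Quotient.lift _
      ((Ideal.Quotient.mk _).comp (MvPolynomial.rename (R := k) ⇑σ).toRingHom)
      (fun p hp => by
        have hmem : (MvPolynomial.rename (R := k) ⇑σ) p ∈
            MvPolynomial.vanishingIdeal k X := by
          rw [MvPolynomial.mem_vanishingIdeal_iff]
          intro x hx
          rw [MvPolynomial.aeval_rename]
          exact (MvPolynomial.mem_vanishingIdeal_iff.1 hp) _ (h x hx)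
        exact Ideal.Quotient.eq_zero_iff_mem.2 hmem)
  else RingHom.id _

/-- The fixed subalgebra `O(V_i)^{s_i}` of `O(V_i)` under the automorphism induced
by the simple transposition `s_i`. -/
def fixedO (i : ℕ) : Subring (O k n (Vi k n i)) :=
  RingHom.eqLocus (permO k n (simple n i) (Vi k n i)) (RingHom.id _)

open Fin.NatCast in
/-- The image `f_i` of `X_i − X_{i+1}` in the coordinate ring `O(X)`. -/
def fbar (X : Set (Fin (n + 1) → k)) (i : ℕ) : O k n X :=
  Ideal.Quotient.mk _
    (MvPolynomial.X (i : Fin (n + 1)) - MvPolynomial.X ((i + 1 : ℕ) : Fin (n + 1)))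

theorem Vt_subset_ZZ (t : Equiv.Perm (Fin (n + 1))) : Vt k n t ⊆ ZZ k n := by
  refine Set.iUnion₂_subset fun L hL => ?_
  exact Set.subset_iUnion₂ (s := fun L _ => L) L hL.1

theorem Vi_subset_ZZ (i : ℕ) : Vi k n i ⊆ ZZ k n := Vt_subset_ZZ k n _

theorem seqSet_subset_ZZ : ∀ l : List ℕ, seqSet k n l ⊆ ZZ k n
  | [] => subset_rfl
  | [_] => Vi_subset_ZZ k n _
  | _ :: _ :: _ => Set.inter_subset_left.trans (Vi_subset_ZZ k n _)

end

/-! Tensor products of commutative rings along ring homomorphisms. -/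

noncomputable section RTensor

open scoped TensorProduct

variable (R A B : Type) [CommRing R] [CommRing A] [CommRing B]
variable (f : R →+* A) (g : R →+* B)

/-- The tensor product `A ⊗_R B` of two commutative rings along the ring
homomorphisms `f : R → A` and `g : R → B` (which define the `R`-module
structures); it is again a commutative ring. -/
def RTensor : Type :=
  letI := f.toAlgebra
  letI := g.toAlgebra
  A ⊗[R] B

instance : CommRing (RTensor R A B f g) :=
  letI := f.toAlgebra
  letI := g.toAlgebra
  Algebra.TensorProduct.instCommRing

/-- The inclusion `a ↦ a ⊗ 1` of the left factor. -/
def RTensor.inl : A →+* RTensor R A B f g :=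
  letI := f.toAlgebra
  letI := g.toAlgebra
  Algebra.TensorProduct.includeLeftRingHom

/-- The inclusion `b ↦ 1 ⊗ b` of the right factor. -/
def RTensor.inr : B →+* RTensor R A B f g :=
  letI := f.toAlgebra
  letI := g.toAlgebra
  Algebra.TensorProduct.includeRight.toRingHom

end RTensor

end TLpaper

/-!
Write `R = O(V_i)^{s_i}` and `f = f_i`. Since `2` is invertible, every `b ∈ O(V_i)` splits as
`(b + s_i b)/2 + (b - s_i b)/2`; the first summand lies in `R`, and the second is antisymmetric,
hence (lifting to an antisymmetric polynomial) a multiple `r f` with `r ∈ R`. The coefficient `r`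
is unique because `f` is a non-zero-divisor on `V_i`: on each Weyl line of `V_i` the linear form
`X_i - X_{i+1}` vanishes only at the origin, and a polynomial vanishing on a punctured line
vanishes on the whole line. Thus `O(V_i) ≅ R ⊕ R` as an `R`-module, and splitting the middle
factor of `O(V_i) ⊗_R O(V_i) ⊗_R O(V_i)` along it gives `B_i ⊕ B_i`, compatibly with the
actions on the outer factors.
-/

section Involution

variable {R A : Type*} [CommRing R] [CommRing A] [Algebra R A]

theorem bijective_algebraMap_add_smul (σ : A →ₐ[R] A) (hσ : Function.Involutive σ)
    (hfix : ∀ a, σ a = a → ∃ r, algebraMap R A r = a) (h2 : IsUnit (2 : A)) {f : A}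
    (hf : σ f = -f) (hanti : ∀ a, σ a = -a → ∃ r : R, r • f = a)
    (hf_smul : ∀ r : R, r • f = 0 → r = 0) :
    Function.Bijective ((Algebra.linearMap R A).coprod (LinearMap.toSpanSingleton R A f)) := by
  refine ⟨(injective_iff_map_eq_zero _).2 fun ⟨r, r'⟩ h => ?_, fun b => ?_⟩
  · simp only [LinearMap.coprod_apply, Algebra.linearMap_apply,
      LinearMap.toSpanSingleton_apply] at h
    have hσh : algebraMap R A r - r' • f = 0 := by
      simpa [hf, sub_eq_add_neg] using congrArg σ h
    have hr : algebraMap R A r = 0 :=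
      h2.mul_right_eq_zero.1 (by linear_combination h + hσh)
    have hr' : r' • f = 0 := by simpa [hr] using h
    have hr0 : r = 0 := hf_smul r (by rw [Algebra.smul_def, hr, zero_mul])
    simp [hr0, hf_smul r' hr']
  · obtain ⟨u, hu⟩ := h2.exists_right_inv
    have hσu : σ u = u := by
      refine h2.mul_right_inj.1 ?_
      rw [hu, ← map_ofNat σ 2, ← map_mul, hu, map_one]
    obtain ⟨r, hr⟩ := hfix (u * (b + σ b)) (by rw [map_mul, map_add, hσ, hσu, add_comm])
    obtain ⟨r', hr'⟩ := hanti (u * (b - σ b)) (by rw [map_mul, map_sub, hσ, hσu]; ring)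
    refine ⟨(r, r'), ?_⟩
    simp only [LinearMap.coprod_apply, Algebra.linearMap_apply, LinearMap.toSpanSingleton_apply,
      hr, hr']
    linear_combination b * hu

end Involution

namespace MvPolynomial

variable {σ R : Type*} [CommRing R]

theorem X_sub_X_dvd_sub_aeval [DecidableEq σ] (a b : σ) (p : MvPolynomial σ R) :
    X a - X b ∣ p - aeval (fun j => if j = b then X a else X j) p := by
  set I := Ideal.span {(X a - X b : MvPolynomial σ R)}
  have hmk : (Ideal.Quotient.mkₐ R I).comp (aeval fun j => if j = b then X a else X j) =
      Ideal.Quotient.mkₐ R I := by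
    refine algHom_ext fun j => ?_
    rw [AlgHom.comp_apply, aeval_X]
    split_ifs with hj
    · subst hj
      exact Ideal.Quotient.eq.2 (Ideal.subset_span rfl)
    · rfl
  rw [← Ideal.mem_span_singleton, ← Ideal.Quotient.eq, ← Ideal.Quotient.mkₐ_eq_mk R,
    ← AlgHom.comp_apply, hmk]

theorem X_sub_X_dvd_of_rename_swap [DecidableEq σ] [IsDomain R] [CharZero R] {a b : σ}
    (hab : a ≠ b) {p : MvPolynomial σ R} (hp : rename (Equiv.swap a b) p = -p) :
    X a - X b ∣ p := by
  set g : σ → MvPolynomial σ R := fun j => if j = b then X a else X j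
  have hg : g ∘ Equiv.swap a b = g := by
    ext1 j
    rcases eq_or_ne j a with rfl | hja
    · simp [g]
    rcases eq_or_ne j b with rfl | hjb
    · simp [g]
    · simp [g, Equiv.swap_apply_of_ne_of_ne hja hjb]
  have hgp : aeval g p = 0 := by
    have h := congrArg (aeval g) hp
    rw [aeval_rename, hg, map_neg, eq_neg_iff_add_eq_zero, ← two_mul] at h
    exact (mul_eq_zero.1 h).resolve_left two_ne_zero
  have hdvd := X_sub_X_dvd_sub_aeval (R := R) a b p
  change _ ∣ p - aeval g p at hdvd
  rwa [hgp, sub_zero] at hdvd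

theorem exists_eq_X_sub_X_mul_of_rename_swap [DecidableEq σ] [IsDomain R] [CharZero R]
    {a b : σ} (hab : a ≠ b) {p : MvPolynomial σ R} (hp : rename (Equiv.swap a b) p = -p) :
    ∃ h, rename (Equiv.swap a b) h = h ∧ p = (X a - X b) * h := by
  obtain ⟨h, rfl⟩ := X_sub_X_dvd_of_rename_swap hab hp
  refine ⟨h, mul_left_cancel₀ (sub_ne_zero.2 fun hX => hab (X_injective hX)) ?_, rfl⟩
  rw [map_mul, map_sub, rename_X, rename_X, Equiv.swap_apply_left, Equiv.swap_apply_right] at hp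
  linear_combination -hp

theorem eval_smul_eq_zero_of_forall_ne_zero {k : Type*} [Field k] [Infinite k]
    {p : MvPolynomial σ k} {v : σ → k} (h : ∀ t : k, t ≠ 0 → eval (t • v) p = 0)
    (t : k) :
    eval (t • v) p = 0 := by
  set q : Polynomial k := aeval (fun j => Polynomial.C (v j) * Polynomial.X) p
  have hq : ∀ t, q.eval t = eval (t • v) p := fun t => by
    rw [← Polynomial.coe_aeval_eq_eval, ← AlgHom.comp_apply, comp_aeval]
    change _ = aeval (t • v) p
    congr 2
    funext j
    rw [map_mul, Polynomial.aeval_C, Polynomial.aeval_X, Pi.smul_apply, smul_eq_mul, mul_comm]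
    rfl
  have hq0 : q = 0 := Polynomial.eq_zero_of_infinite_isRoot q <|
    (Set.finite_singleton (0 : k)).infinite_compl.mono fun t ht => by simpa [hq] using h t ht
  rw [← hq, hq0, Polynomial.eval_zero]

end MvPolynomial

open scoped TensorProduct

namespace TensorProduct

open Algebra.TensorProduct

variable {R A : Type*} [CommRing R] [CommRing A] [Algebra R A]

noncomputable def equivProdOfEquivProd {M : Type*} [AddCommGroup M] [Module R M]
    (φ : M ≃ₗ[R] R × R) : A ⊗[R] M ≃ₗ[A] A × A :=
  (AlgebraTensorModule.congr (LinearEquiv.refl A A) φ).trans <|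
    (prodRight R A A R R).trans <|
      (AlgebraTensorModule.rid R A A).prodCongr (AlgebraTensorModule.rid R A A)

theorem equivProdOfEquivProd_includeLeftRingHom_mul {B : Type*} [CommRing B] [Algebra R B]
    (φ : B ≃ₗ[R] R × R) (α : A) (x : A ⊗[R] B) :
    equivProdOfEquivProd φ (includeLeftRingHom α * x) = (α, α) * equivProdOfEquivProd φ x := by
  rw [show includeLeftRingHom α * x = α • x from (_root_.Algebra.smul_def α x).symm, map_smul]
  rfl

theorem exists_addEquiv_prod {M C : Type*} [CommRing M] [Algebra R M] [CommRing C]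
    [Algebra R C] (j : A →+* M) (hj : ∀ r, algebraMap R M r = j (algebraMap R A r))
    (π : M ≃+ A × A) (hπ : ∀ α m, π (j α * m) = (α, α) * π m) :
    ∃ e : M ⊗[R] C ≃+ (A ⊗[R] C) × (A ⊗[R] C),
      (∀ α x, e (includeLeftRingHom (j α) * x) =
        (includeLeftRingHom α, includeLeftRingHom α) * e x) ∧
      (∀ γ x, e (x * includeRight γ) = e x * (includeRight γ, includeRight γ)) := by
  let πR : M ≃ₗ[R] A × A :=
    { π with map_smul' := fun r m => by simp [_root_.Algebra.smul_def, hj, hπ] }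
  let e := (congr πR (LinearEquiv.refl R C)).trans (prodLeft R R A A C)
  have he : ∀ m c, e (m ⊗ₜ c) = ((π m).1 ⊗ₜ c, (π m).2 ⊗ₜ c) := fun m c =>
    prodLeft_tmul R R A A C (π m).1 (π m).2 c
  refine ⟨e.toAddEquiv, fun α x => ?_, fun γ x => ?_⟩
  all_goals
    induction x using TensorProduct.induction_on with
    | zero => simp
    | tmul m c => simp [he, hπ]
    | add x y hx hy => simp_all [mul_add, add_mul]

end TensorProduct

namespace TLpaper

/- `RTensor` makes `A ⊗_R A` an `R`-algebra through its right factor, which is not Mathlib's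
instance on `A ⊗[R] A`; this is why `TensorProduct.exists_addEquiv_prod` takes an arbitrary
`R`-algebra `M`, related to `A` only through `j` and `hj`. -/
theorem RTensor.exists_addEquiv_prod {R A : Type} [CommRing R] [CommRing A] (ι : R →+* A)
    (φ : letI := ι.toAlgebra; A ≃ₗ[R] R × R) :
    ∃ e : RTensor R (RTensor R A A ι ι) A ((RTensor.inr R A A ι ι).comp ι) ι ≃+
        RTensor R A A ι ι × RTensor R A A ι ι,
      (∀ α x, e (RTensor.inl _ _ _ _ _ (RTensor.inl R A A ι ι α) * x) =
        (RTensor.inl R A A ι ι α, RTensor.inl R A A ι ι α) * e x) ∧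
      (∀ γ x, e (x * RTensor.inr _ _ _ _ _ γ) =
        e x * (RTensor.inr R A A ι ι γ, RTensor.inr R A A ι ι γ)) := by
  let _ : Algebra R A := ι.toAlgebra
  let _ : Algebra R (RTensor R A A ι ι) := ((RTensor.inr R A A ι ι).comp ι).toAlgebra
  exact TensorProduct.exists_addEquiv_prod (M := RTensor R A A ι ι) (C := A)
    Algebra.TensorProduct.includeLeftRingHom
    (fun r => (Algebra.TensorProduct.algebraMap_apply' r).symm)
    (TensorProduct.equivProdOfEquivProd φ).toAddEquiv
    (TensorProduct.equivProdOfEquivProd_includeLeftRingHom_mul φ)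

section WeylLines

variable {k : Type} [Field k] {n : ℕ}

theorem preimage_comp_Hyp (σ t : Equiv.Perm (Fin (n + 1))) :
    (· ∘ ⇑σ) ⁻¹' Hyp k n t = Hyp k n (σ * t * σ⁻¹) := by
  ext x
  simp only [Hyp, Set.mem_preimage, Set.mem_ofPred_eq, Function.comp_apply, Equiv.sum_comp,
    Equiv.Perm.coe_mul]
  exact and_congr_right fun _ => σ.forall_congr fun j => by simp

theorem IsWeylLine.preimage_comp {L : Set (Fin (n + 1) → k)} (hL : IsWeylLine k n L)
    (σ : Equiv.Perm (Fin (n + 1))) : IsWeylLine k n ((· ∘ ⇑σ) ⁻¹' L) := by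
  obtain ⟨⟨v, hv, rfl⟩, T, hT, hLT⟩ := hL
  refine ⟨⟨v ∘ ⇑σ.symm, fun h => hv ?_, ?_⟩, (fun t => σ * t * σ⁻¹) '' T, ?_, ?_⟩
  · ext j
    simpa using congrFun h (σ j)
  · ext x
    refine exists_congr fun c => ⟨fun h => ?_, fun h => ?_⟩ <;> ext j
    · simpa using congrFun h (σ.symm j)
    · simp [← h]
  · rintro _ ⟨t, ht, rfl⟩
    obtain ⟨a, b, hab, rfl⟩ := hT t ht
    exact ⟨σ a, σ b, σ.injective.ne hab, (Equiv.swap_apply_apply σ a b).symm⟩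
  · rw [hLT, Set.preimage_inter, Set.preimage_iInter₂, Set.biInter_image]
    simp only [preimage_comp_Hyp]
    congr 1
    ext x
    simp [Equiv.sum_comp]

theorem preimage_comp_Vt_subset (σ t : Equiv.Perm (Fin (n + 1))) :
    (· ∘ ⇑σ) ⁻¹' Vt k n t ⊆ Vt k n (σ * t * σ⁻¹) := by
  intro x hx
  obtain ⟨L, ⟨hL, hLt⟩, hxL⟩ := Set.mem_iUnion₂.1 hx
  refine Set.mem_iUnion₂.2 ⟨_, ⟨hL.preimage_comp σ, fun h => hLt ?_⟩, hxL⟩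
  rw [← preimage_comp_Hyp] at h
  refine (Set.preimage_subset_preimage_iff fun y _ => ⟨y ∘ ⇑σ.symm, ?_⟩).1 h
  ext j
  simp

theorem IsWeylLine.exists_eq_range_smul_of_not_subset_Hyp {L : Set (Fin (n + 1) → k)}
    (hL : IsWeylLine k n L) {a b : Fin (n + 1)} (h : ¬L ⊆ Hyp k n (Equiv.swap a b)) :
    ∃ v : Fin (n + 1) → k, v a ≠ v b ∧ L = Set.range fun c : k => c • v := by
  obtain ⟨⟨v, -, rfl⟩, T, -, hLT⟩ := hL
  refine ⟨v, fun hab => h ?_, rfl⟩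
  rintro _ ⟨c, rfl⟩
  have hmem : c • v ∈ {x | ∑ i, x i = 0} ∩ ⋂ t ∈ T, Hyp k n t := hLT ▸ ⟨c, rfl⟩
  refine ⟨hmem.1, fun j => ?_⟩
  rcases eq_or_ne j a with rfl | hja
  · simp [hab]
  rcases eq_or_ne j b with rfl | hjb
  · simp [hab]
  · rw [Equiv.swap_apply_of_ne_of_ne hja hjb]

end WeylLines

section CoordinateRing

variable {k : Type} [Field k] {n : ℕ}

open MvPolynomial

noncomputable def O.mk (X : Set (Fin (n + 1) → k)) : MvPolynomial (Fin (n + 1)) k →+* O k n X :=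
  Ideal.Quotient.mk _

theorem O.mk_surjective (X : Set (Fin (n + 1) → k)) : Function.Surjective (O.mk X) :=
  Ideal.Quotient.mk_surjective

theorem O.mk_eq_zero_iff {X : Set (Fin (n + 1) → k)} {p : MvPolynomial (Fin (n + 1)) k} :
    O.mk X p = 0 ↔ ∀ x ∈ X, eval x p = 0 :=
  Ideal.Quotient.eq_zero_iff_mem.trans mem_vanishingIdeal_iff

theorem O.mk_C_inv_two_mul_two [CharZero k] (X : Set (Fin (n + 1) → k)) :
    O.mk X (C (2⁻¹ : k)) * 2 = 1 := by
  rw [← map_ofNat (O.mk X) 2, ← map_mul, ← map_ofNat C 2, ← C_mul,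
    inv_mul_cancel₀ two_ne_zero, C_1, map_one]

theorem O.isUnit_two [CharZero k] (X : Set (Fin (n + 1) → k)) : IsUnit (2 : O k n X) :=
  IsUnit.of_mul_eq_one_right _ (O.mk_C_inv_two_mul_two X)

theorem permO_mk {σ : Equiv.Perm (Fin (n + 1))} {X : Set (Fin (n + 1) → k)}
    (hX : ∀ x ∈ X, x ∘ ⇑σ ∈ X) (p : MvPolynomial (Fin (n + 1)) k) :
    permO k n σ X (O.mk X p) = O.mk X (rename σ p) := by
  unfold permO
  exact (congrArg (fun φ : O k n X →+* O k n X => φ (O.mk X p)) (dif_pos hX)).trans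
    (Ideal.Quotient.lift_mk _ _ _)

open Fin.NatCast

variable (i : ℕ)

theorem comp_simple_mem_Vi : ∀ x ∈ Vi k n i, x ∘ ⇑(simple n i) ∈ Vi k n i := by
  intro x hx
  have hxx : (x ∘ ⇑(simple n i)) ∘ ⇑(simple n i) = x := by
    ext j
    simp [simple]
  have h := preimage_comp_Vt_subset (simple n i) (simple n i)
    (show x ∘ ⇑(simple n i) ∈ (· ∘ ⇑(simple n i)) ⁻¹' Vt k n (simple n i) by
      rwa [Set.mem_preimage, hxx])
  rwa [mul_inv_cancel_right] at h

theorem rename_simple_involutive :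
    Function.Involutive (rename (R := k) ⇑(simple n i)) := fun p => by
  rw [rename_rename, ← Equiv.Perm.coe_mul, simple, Equiv.swap_mul_self, Equiv.Perm.coe_one,
    rename_id_apply]

theorem permO_simple_involutive : Function.Involutive (permO k n (simple n i) (Vi k n i)) := by
  intro a
  obtain ⟨p, rfl⟩ := O.mk_surjective _ a
  rw [permO_mk (comp_simple_mem_Vi i), permO_mk (comp_simple_mem_Vi i),
    rename_simple_involutive]

theorem permO_simple_fbar :
    permO k n (simple n i) (Vi k n i) (fbar k n (Vi k n i) i) = -fbar k n (Vi k n i) i := by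
  change permO k n _ _ (O.mk _ _) = -O.mk _ _
  rw [permO_mk (comp_simple_mem_Vi i), ← map_neg, map_sub, rename_X, rename_X, simple,
    Equiv.swap_apply_left, Equiv.swap_apply_right, neg_sub]

variable {i}

theorem exists_fixedO_mul_fbar [CharZero k] (hi : i < n) {a : O k n (Vi k n i)}
    (ha : permO k n (simple n i) (Vi k n i) a = -a) :
    ∃ r : fixedO k n i, (r : O k n (Vi k n i)) * fbar k n (Vi k n i) i = a := by
  obtain ⟨p, rfl⟩ := O.mk_surjective _ a
  set q := C (2⁻¹ : k) * (p - rename (simple n i) p)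
  have hq : O.mk (Vi k n i) q = O.mk _ p := by
    rw [map_mul, map_sub, ← permO_mk (comp_simple_mem_Vi i), ha, sub_neg_eq_add, ← two_mul,
      ← mul_assoc, O.mk_C_inv_two_mul_two, one_mul]
  have hq_anti : rename (simple n i) q = -q := by
    rw [map_mul, map_sub, rename_C, rename_simple_involutive]
    ring
  have hne : (i : Fin (n + 1)) ≠ ((i + 1 : ℕ) : Fin (n + 1)) := by
    rw [Ne, Fin.ext_iff, Fin.val_cast_of_lt (by omega), Fin.val_cast_of_lt (by omega)]
    omega
  obtain ⟨h, hh, hqh⟩ := exists_eq_X_sub_X_mul_of_rename_swap hne hq_anti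
  refine ⟨⟨O.mk _ h, ?_⟩, ?_⟩
  · change permO k n _ _ (O.mk _ h) = O.mk _ h
    rw [permO_mk (comp_simple_mem_Vi i)]
    exact congrArg _ hh
  · change O.mk _ h * O.mk _ _ = O.mk _ p
    rw [← map_mul, mul_comm, ← hqh, hq]

theorem mul_fbar_eq_zero [CharZero k] {a : O k n (Vi k n i)}
    (ha : a * fbar k n (Vi k n i) i = 0) : a = 0 := by
  obtain ⟨p, rfl⟩ := O.mk_surjective _ a
  change O.mk _ p * O.mk _ _ = 0 at ha
  rw [← map_mul, O.mk_eq_zero_iff] at ha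
  rw [O.mk_eq_zero_iff]
  intro x hx
  obtain ⟨L, hL, hxL⟩ := Set.mem_iUnion₂.1 hx
  obtain ⟨v, hv, rfl⟩ := hL.1.exists_eq_range_smul_of_not_subset_Hyp hL.2
  obtain ⟨c, rfl⟩ := hxL
  refine eval_smul_eq_zero_of_forall_ne_zero (fun t ht => ?_) c
  have htv := ha (t • v) (Set.mem_iUnion₂.2 ⟨_, hL, t, rfl⟩)
  rw [map_mul, map_sub, eval_X, eval_X, Pi.smul_apply, Pi.smul_apply, smul_eq_mul, smul_eq_mul,
    ← mul_sub] at htv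
  exact (mul_eq_zero.1 htv).resolve_right (mul_ne_zero ht (sub_ne_zero.2 hv))

end CoordinateRing

variable (k : Type) [Field k] [CharZero k] (n : ℕ)

/-- (0-indexed.)  For `i < n` and `B_i := O(V_i) ⊗_{R_i} O(V_i)`
(`R_i := O(V_i)^{s_i}`) there is an isomorphism of `(O(Z), O(Z))`-bimodules
`O(V_i) ⊗_{R_i} O(V_i) ⊗_{R_i} O(V_i) ≅ B_i ⊕ B_i`,
the `O(Z)`-actions being through `O(Z) → O(V_i)` on the outer factors (this is the
underlying ungraded form of the third Temperley–Lieb relation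
`B_i ∗ B_i ≅ B_i ⊕ B_i[−2]`). -/
theorem third_temperley_lieb_relation (i : ℕ) (hi : i < n) :
    letI subi : fixedO k n i →+* O k n (Vi k n i) := (fixedO k n i).subtype
    -- Bi = O(V_i) ⊗_{R_i} O(V_i)
    letI Bi := RTensor (fixedO k n i) (O k n (Vi k n i)) (O k n (Vi k n i)) subi subi
    letI fiBi : fixedO k n i →+* Bi :=
      (RTensor.inr (fixedO k n i) (O k n (Vi k n i)) (O k n (Vi k n i)) subi subi).comp
        subi
    -- LHS = (O(V_i) ⊗_{R_i} O(V_i)) ⊗_{R_i} O(V_i)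
    letI LHS := RTensor (fixedO k n i) Bi (O k n (Vi k n i)) fiBi subi
    letI resi : O k n (ZZ k n) →+* O k n (Vi k n i) := res k n (Vi_subset_ZZ k n i)
    letI lL : O k n (ZZ k n) →+* LHS :=
      ((RTensor.inl (fixedO k n i) Bi (O k n (Vi k n i)) fiBi subi).comp
        (RTensor.inl (fixedO k n i) (O k n (Vi k n i)) (O k n (Vi k n i)) subi subi)).comp
        resi
    letI rL : O k n (ZZ k n) →+* LHS :=
      (RTensor.inr (fixedO k n i) Bi (O k n (Vi k n i)) fiBi subi).comp resi
    letI lB : O k n (ZZ k n) →+* Bi :=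
      (RTensor.inl (fixedO k n i) (O k n (Vi k n i)) (O k n (Vi k n i)) subi subi).comp
        resi
    letI rB : O k n (ZZ k n) →+* Bi :=
      (RTensor.inr (fixedO k n i) (O k n (Vi k n i)) (O k n (Vi k n i)) subi subi).comp
        resi
    -- RHS = B_i ⊕ B_i, with the componentwise bimodule structure
    letI lR : O k n (ZZ k n) →+* Bi × Bi := RingHom.prod lB lB
    letI rR : O k n (ZZ k n) →+* Bi × Bi := RingHom.prod rB rB
    ∃ e : LHS ≃+ Bi × Bi,
      (∀ (a : O k n (ZZ k n)) (x : LHS), e (lL a * x) = lR a * e x) ∧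
      (∀ (a : O k n (ZZ k n)) (x : LHS), e (x * rL a) = e x * rR a) := by
  let _ : Algebra (fixedO k n i) (O k n (Vi k n i)) := (fixedO k n i).subtype.toAlgebra
  let s : O k n (Vi k n i) →ₐ[fixedO k n i] O k n (Vi k n i) :=
    { permO k n (simple n i) (Vi k n i) with commutes' := fun r => r.2 }
  have hsplit := bijective_algebraMap_add_smul s (permO_simple_involutive i)
    (fun a ha => ⟨⟨a, ha⟩, rfl⟩) (O.isUnit_two _) (permO_simple_fbar i)
    (fun _ => exists_fixedO_mul_fbar hi) (fun r hr => Subtype.ext (mul_fbar_eq_zero hr))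
  obtain ⟨e, hl, hr⟩ := RTensor.exists_addEquiv_prod _ (LinearEquiv.ofBijective _ hsplit).symm
  exact ⟨e, fun a x => hl _ x, fun a x => hr _ x⟩

end TLpaper
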